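/- arXiv:2403.12437 — 8 statements merged into one kernel-verified Lean document; each statement's English description precedes it below -/
import Mathlib

section
/- Let (X, κ) = (X_0, κ) ∨ (X_1, κ) be a wedge of finite digital images with wedge point x_0, where #X_0 > 1 and #X_1 > 1. If X_0 and X_1 are both irreducible, then X is irreducible. -/
/-- A point of the digital ambient space `ℤ^n`. -/
abbrev ZPoint (n : ℕ) : Type := Fin n → ℤ

/-- `f : X → Y` is `(κ, lam)`-continuous: adjacent points map to equal or adjacent points. -/
def DigCont {α β : Type*} (κ : α → α → Prop) (lam : β → β → Prop)
    (X : Set α) (Y : Set β) (f : X → Y) : Prop :=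
  ∀ x x' : X, κ x.1 x'.1 → f x = f x' ∨ lam (f x).1 (f x').1

/-- A digital homotopy of length `m` from `f` to `g` (time parametrized by `0, 1, …, m`). -/
def HtpyN {α β : Type*} (κ : α → α → Prop) (lam : β → β → Prop)
    (X : Set α) (Y : Set β) (m : ℕ) (f g : X → Y) : Prop :=
  ∃ F : X → ℕ → Y,
    (∀ x, F x 0 = f x) ∧ (∀ x, F x m = g x) ∧
    (∀ x, ∀ t, t < m → (F x t = F x (t + 1) ∨ lam (F x t).1 (F x (t + 1)).1)) ∧
    (∀ t, t ≤ m → DigCont κ lam X Y (fun x => F x t))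

/-- `f` and `g` are digitally homotopic. -/
def Htpy {α β : Type*} (κ : α → α → Prop) (lam : β → β → Prop)
    (X : Set α) (Y : Set β) (f g : X → Y) : Prop :=
  ∃ m : ℕ, HtpyN κ lam X Y m f g

/-- A digital image `(X, κ)` is reducible if it is homotopy equivalent to a digital
image `(Y, lam)` with strictly fewer points. -/
def Reducible {α : Type*} (κ : α → α → Prop) (X : Set α) : Prop :=
  ∃ (k : ℕ) (Y : Set (ZPoint k)) (lam : ZPoint k → ZPoint k → Prop),
    Symmetric lam ∧ Irreflexive lam ∧
    Y.Finite ∧ Y.ncard < X.ncard ∧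
    ∃ (f : X → Y) (g : Y → X),
      DigCont κ lam X Y f ∧ DigCont lam κ Y X g ∧
      Htpy κ κ X X (g ∘ f) id ∧ Htpy lam lam Y Y (f ∘ g) id

/-- A digital image `(X, κ)` is rigid if the only continuous self-map of `X`
homotopic to the identity is the identity. -/
def Rigid {α : Type*} (κ : α → α → Prop) (X : Set α) : Prop :=
  ∀ f : X → X, DigCont κ κ X X f → Htpy κ κ X X id f → f = id

/-- A `κ`-path of length `m` in `X` from `a` to `b`. -/
def IsPathIn {α : Type*} (κ : α → α → Prop) (X : Set α) (m : ℕ) (p : ℕ → α)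
    (a b : α) : Prop :=
  (∀ i ≤ m, p i ∈ X) ∧ p 0 = a ∧ p m = b ∧
    ∀ i < m, p i = p (i + 1) ∨ κ (p i) (p (i + 1))

/-- `(X, κ)` is connected: any two points of `X` are joined by a `κ`-path in `X`. -/
def DigConnected {α : Type*} (κ : α → α → Prop) (X : Set α) : Prop :=
  ∀ a ∈ X, ∀ b ∈ X, ∃ (m : ℕ) (p : ℕ → α), IsPathIn κ X m p a b

/-- `A` is a freezing set for `(X, κ)`. -/
def FreezingSet {α : Type*} (κ : α → α → Prop) (X A : Set α) : Prop :=
  ∀ f : X → X, DigCont κ κ X X f → (∀ x : X, x.1 ∈ A → f x = x) → f = id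

/-- `A` is a cold set for `(X, κ)`. -/
def ColdSet {α : Type*} (κ : α → α → Prop) (X A : Set α) : Prop :=
  ∀ f : X → X, DigCont κ κ X X f → (∀ x : X, x.1 ∈ A → f x = x) →
    ∀ x : X, f x = x ∨ κ (f x).1 x.1

/-- The generalized normal product adjacency `NP_v(κ_1, …, κ_v)`:
distinct points are adjacent iff each coordinate pair is equal or adjacent. -/
def NPadj {v : ℕ} {α : Fin v → Type*} (κ : ∀ i, α i → α i → Prop)
    (x x' : ∀ i, α i) : Prop :=
  x ≠ x' ∧ ∀ i, x i = x' i ∨ κ i (x i) (x' i)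

/-- `S` is a digital `κ`-simple closed curve of `m` distinct points. -/
def IsSimpleClosedCurve {α : Type*} (κ : α → α → Prop) (S : Set α) (m : ℕ) : Prop :=
  ∃ s : ZMod m → α, Function.Injective s ∧ S = Set.range s ∧
    ∀ i j : ZMod m, (κ (s i) (s j) ↔ (j = i + 1 ∨ j = i - 1))

/-- `f` is a 1-map in `C(X, κ)`: a continuous self-map moving each point by at most one step. -/
def OneMap {α : Type*} (κ : α → α → Prop) (X : Set α) (f : X → X) : Prop :=
  DigCont κ κ X X f ∧ ∀ x : X, f x = x ∨ κ (f x).1 x.1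

section AuxLemmas

lemma digCont_comp {α β γ : Type*} {κ : α → α → Prop} {lam : β → β → Prop} {μ : γ → γ → Prop}
    {X : Set α} {Y : Set β} {Z : Set γ} {f : X → Y} {g : Y → Z}
    (hf : DigCont κ lam X Y f) (hg : DigCont lam μ Y Z g) :
    DigCont κ μ X Z (fun x => g (f x)) := by
  intro x x' h
  rcases hf x x' h with h1 | h1
  · exact Or.inl (congrArg g h1)
  · exact hg _ _ h1

lemma digCont_iterate {α : Type*} {κ : α → α → Prop} {X : Set α} {h : X → X}
    (hc : DigCont κ κ X X h) : ∀ k, DigCont κ κ X X h^[k] := by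
  intro k
  induction k with
  | zero =>
      intro x x' hx
      simp only [Function.iterate_zero, id_eq]
      exact Or.inr hx
  | succ k ih =>
      intro x x' hx
      simp only [Function.iterate_succ_apply']
      rcases ih x x' hx with h1 | h1
      · exact Or.inl (congrArg h h1)
      · exact hc _ _ h1

lemma exists_iterate_eq {Z : Type*} [Finite Z] (c : Z → Z) :
    ∃ i j : ℕ, i < j ∧ c^[i] = c^[j] := by
  obtain ⟨i, j, hne, hEq⟩ := Finite.exists_ne_map_eq_of_infinite (fun k : ℕ => c^[k])
  rcases hne.lt_or_gt with h | h
  · exact ⟨i, j, h, hEq⟩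
  · exact ⟨j, i, h, hEq.symm⟩

/-- Any finite digital image admitting a non-injective continuous self-map that moves
each point by at most one step is reducible. -/
lemma reducible_of_step {n : ℕ} (κ : ZPoint n → ZPoint n → Prop)
    (hsym : Symmetric κ) (hirr : Irreflexive κ)
    (Z : Set (ZPoint n)) (hfin : Z.Finite)
    (h : Z → Z) (hc : DigCont κ κ Z Z h)
    (hstep : ∀ x, h x = x ∨ κ (h x).1 x.1)
    (hni : ¬ Function.Injective h) : Reducible κ Z := by
  classical
  haveI : Finite ↥Z := hfin.to_subtype
  obtain ⟨i, j, hij, hEq⟩ := exists_iterate_eq h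
  set d : ℕ := j - i with hd
  have hd1 : 1 ≤ d := by omega
  have hji : j = i + d := by omega
  have fixA : ∀ x : Z, h^[d] (h^[i] x) = h^[i] x := by
    intro x
    have h1 : h^[i] x = h^[j] x := congrFun hEq x
    have h2 : h^[j] x = h^[d] (h^[i] x) := by
      rw [hji, Nat.add_comm, Function.iterate_add_apply]
    rw [← h2, ← h1]
  set M : ℕ := d * (i + 1) with hM
  have hM1 : 1 ≤ M := by
    rw [hM]; exact Nat.mul_pos (by omega) (by omega)
  have hMi : i ≤ M := by
    rw [hM]
    calc i ≤ i + 1 := by omega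
    _ ≤ d * (i + 1) := Nat.le_mul_of_pos_left _ (by omega)
  have hMiter : (h^[d])^[i+1] = h^[M] := (Function.iterate_mul h d (i+1)).symm
  have fixM : ∀ x : Z, h^[M] (h^[i] x) = h^[i] x := by
    intro x
    rw [← hMiter]
    exact Function.iterate_fixed (fixA x) (i+1)
  have fixM' : ∀ y ∈ Set.range h^[M], h^[M] y = y := by
    rintro y ⟨x, rfl⟩
    have : h^[M] x = h^[i] (h^[M - i] x) := by
      rw [← Function.iterate_add_apply]
      congr 1
      omega
    rw [this]
    exact fixM _
  have hnsurj : ¬ Function.Surjective h := fun hs => hni (Finite.injective_iff_surjective.mpr hs)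
  simp only [Function.Surjective, not_forall, not_exists] at hnsurj
  obtain ⟨z, hz⟩ := hnsurj
  have hzA : z ∉ Set.range h^[M] := by
    rintro ⟨x, hx⟩
    have hMs : M = (M - 1) + 1 := by omega
    rw [hMs, Function.iterate_succ_apply'] at hx
    exact hz _ hx
  set A : Set ↥Z := Set.range h^[M] with hA
  set Y : Set (ZPoint n) := Subtype.val '' A with hY
  have hYZ : Y ⊆ Z := by
    rintro y ⟨a, _, rfl⟩
    exact a.2
  have hYfin : Y.Finite := hfin.subset hYZ
  have hcard : Y.ncard < Z.ncard := by
    have h1 : Y.ncard = A.ncard := Set.ncard_image_of_injective A Subtype.val_injective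
    have h2 : A ⊂ Set.univ := by
      refine Set.ssubset_univ_iff.mpr (fun hcontra => ?_)
      exact hzA (by rw [hcontra]; trivial)
    have h3 : A.ncard < (Set.univ : Set ↥Z).ncard := Set.ncard_lt_ncard h2 Set.finite_univ
    have h4 : (Set.univ : Set ↥Z).ncard = Z.ncard := by
      rw [Set.ncard_univ, Nat.card_coe_set_eq]
    omega
  refine ⟨n, Y, κ, hsym, hirr, hYfin, hcard, ?_⟩
  refine ⟨fun x => ⟨(h^[M] x).1, ⟨h^[M] x, ⟨x, rfl⟩, rfl⟩⟩, fun y => ⟨y.1, hYZ y.2⟩, ?_, ?_, ?_, ?_⟩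
  · -- continuity of f
    intro x x' hx
    rcases digCont_iterate hc M x x' hx with h1 | h1
    · exact Or.inl (Subtype.ext (show (h^[M] x).1 = (h^[M] x').1 from congrArg Subtype.val h1))
    · exact Or.inr h1
  · -- continuity of g
    intro y y' hy
    exact Or.inr hy
  · -- Htpy (g ∘ f) id
    refine ⟨M, fun x t => h^[M - t] x, ?_, ?_, ?_, ?_⟩
    · intro x
      simp only [Nat.sub_zero, Function.comp_apply]
    · intro x
      simp only [Nat.sub_self, Function.iterate_zero, id_eq]
    · intro x t ht
      have heq : M - t = (M - (t+1)) + 1 := by omega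
      show (h^[M - t] x = h^[M - (t+1)] x) ∨ κ (h^[M - t] x).1 (h^[M - (t+1)] x).1
      rw [heq, Function.iterate_succ_apply']
      exact hstep (h^[M - (t+1)] x)
    · intro t _
      exact digCont_iterate hc (M - t)
  · -- Htpy (f ∘ g) id
    have hfg : ∀ y : Y, (⟨(h^[M] ⟨y.1, hYZ y.2⟩).1, ⟨h^[M] ⟨y.1, hYZ y.2⟩, ⟨⟨y.1, hYZ y.2⟩, rfl⟩, rfl⟩⟩ : Y) = y := by
      intro y
      obtain ⟨a, haA, hav⟩ := y.2
      have hga : (⟨y.1, hYZ y.2⟩ : Z) = a := Subtype.ext hav.symm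
      apply Subtype.ext
      show (h^[M] ⟨y.1, hYZ y.2⟩).1 = y.1
      rw [hga, fixM' a haA, hav]
    refine ⟨0, fun y t => y, ?_, fun y => rfl, by omega, ?_⟩
    · intro y
      exact (hfg y).symm
    · intro t _
      intro y y' hy
      exact Or.inr hy

/-- From a homotopy between a non-injective map and the identity, extract a
non-injective continuous one-step-from-identity self-map. -/
lemma exists_step_of_htpy {n : ℕ} (κ : ZPoint n → ZPoint n → Prop)
    (Z : Set (ZPoint n)) (hfin : Z.Finite)
    (f0 : Z → Z) (hni : ¬ Function.Injective f0)
    (hh : Htpy κ κ Z Z f0 id) :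
    ∃ q : Z → Z, DigCont κ κ Z Z q ∧ (∀ x, q x = x ∨ κ (q x).1 x.1) ∧
      ¬ Function.Injective q := by
  classical
  haveI : Finite ↥Z := hfin.to_subtype
  obtain ⟨m, F, h0, hm, hstep, hcont⟩ := hh
  set P : ℕ → Prop := fun t => Function.Injective (fun x => F x t) with hP
  have hP0 : ¬ P 0 := by
    have : (fun x => F x 0) = f0 := funext h0
    simpa [P, this] using hni
  have hPm : P m := by
    have : (fun x => F x m) = id := funext hm
    simp [P, this]
    exact Function.injective_id
  have hivt : ∃ t, t < m ∧ ¬ P t ∧ P (t + 1) := by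
    by_contra hcon
    push_neg at hcon
    have hall : ∀ t, t ≤ m → ¬ P t := by
      intro t
      induction t with
      | zero => exact fun _ => hP0
      | succ k ih =>
          intro hk
          have hkm : k < m := by omega
          have hnk : ¬ P k := ih (by omega)
          exact fun hp => (hcon k hkm hnk) hp
    exact (hall m le_rfl) hPm
  obtain ⟨t, htm, hPt, hPt1⟩ := hivt
  set c : Z → Z := fun x => F x (t + 1) with hc
  have hcinj : Function.Injective c := hPt1
  have hccont : DigCont κ κ Z Z c := hcont (t+1) (by omega)
  obtain ⟨i, j, hij, hEq⟩ := exists_iterate_eq c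
  set N : ℕ := j - i with hN
  have hN1 : 1 ≤ N := by omega
  have hcN : ∀ x, c^[N] x = x := by
    intro x
    have h1 : c^[i] x = c^[j] x := congrFun hEq x
    have h2 : c^[j] x = c^[i] (c^[N] x) := by
      have : j = i + N := by omega
      rw [this, Function.iterate_add_apply]
    have h3 : c^[i] x = c^[i] (c^[N] x) := h1.trans h2
    exact (Function.Injective.iterate hcinj i h3).symm
  have hNs : N - 1 + 1 = N := by omega
  have hcN1 : ∀ x, c (c^[N-1] x) = x := by
    intro x
    have e := Function.iterate_succ_apply' c (N-1) x
    simp only [Nat.succ_eq_add_one, hNs] at e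
    rw [← e]
    exact hcN x
  refine ⟨fun x => F (c^[N-1] x) t, ?_, ?_, ?_⟩
  · exact digCont_comp (digCont_iterate hccont (N-1)) (hcont t (by omega))
  · intro x
    have hs := hstep (c^[N-1] x) t htm
    have h2 : F (c^[N-1] x) (t+1) = x := hcN1 x
    rcases hs with h1 | h1
    · exact Or.inl (h1.trans h2)
    · rw [h2] at h1
      exact Or.inr h1
  · intro hinj
    apply hPt
    intro a b hab
    have hsurj : ∀ y, c^[N-1] (c y) = y := by
      intro y
      have e := Function.iterate_succ_apply c (N-1) y
      simp only [Nat.succ_eq_add_one, hNs] at e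
      rw [← e]
      exact hcN y
    have ha : c^[N-1] (c a) = a := hsurj a
    have hb : c^[N-1] (c b) = b := hsurj b
    have : F (c^[N-1] (c a)) t = F (c^[N-1] (c b)) t := by
      rw [ha, hb]; exact hab
    have := hinj this
    rw [← ha, ← hb, this]

end AuxLemmas
section WedgeLemmas

/-- Restricting a one-step self-map of a wedge to one factor via the retraction. -/
lemma restrict_step {n : ℕ} (κ : ZPoint n → ZPoint n → Prop) (hsym : Symmetric κ)
    (X A B : Set (ZPoint n)) (x₀ : ZPoint n)
    (hAX : A ⊆ X) (hXcov : X ⊆ A ∪ B)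
    (hx0A : x₀ ∈ A)
    (hwedge : ∀ x ∈ A, ∀ y ∈ B, κ x y → x = x₀ ∨ y = x₀)
    (q : X → X) (hqc : DigCont κ κ X X q)
    (hqs : ∀ x, q x = x ∨ κ (q x).1 x.1) :
    ∃ p : A → A, DigCont κ κ A A p ∧ (∀ x, p x = x ∨ κ (p x).1 x.1) ∧
      (∀ x : A, ((q ⟨x.1, hAX x.2⟩).1 ∈ A → (p x).1 = (q ⟨x.1, hAX x.2⟩).1) ∧
                ((q ⟨x.1, hAX x.2⟩).1 ∉ A → (p x).1 = x₀)) := by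
  classical
  set r : X → A := fun y => if h : y.1 ∈ A then ⟨y.1, h⟩ else ⟨x₀, hx0A⟩ with hr
  refine ⟨fun x => r (q ⟨x.1, hAX x.2⟩), ?_, ?_, ?_⟩
  · -- continuity
    intro x x' hk
    set y : X := q ⟨x.1, hAX x.2⟩ with hy
    set y' : X := q ⟨x'.1, hAX x'.2⟩ with hy'
    rcases hqc ⟨x.1, hAX x.2⟩ ⟨x'.1, hAX x'.2⟩ hk with h1 | h1
    · exact Or.inl (congrArg r h1)
    · by_cases hyA : y.1 ∈ A <;> by_cases hy'A : y'.1 ∈ A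
      · right
        show κ (r y).1 (r y').1
        rw [hr]
        simp only [dif_pos hyA, dif_pos hy'A]
        exact h1
      · have hy'B : y'.1 ∈ B := (hXcov y'.2).resolve_left hy'A
        rcases hwedge y.1 hyA y'.1 hy'B h1 with h2 | h2
        · left
          apply Subtype.ext
          show (r y).1 = (r y').1
          rw [hr]
          simp only [dif_pos hyA, dif_neg hy'A]
          exact h2
        · exact absurd (h2 ▸ hx0A) hy'A
      · have hyB : y.1 ∈ B := (hXcov y.2).resolve_left hyA
        rcases hwedge y'.1 hy'A y.1 hyB (hsym h1) with h2 | h2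
        · left
          apply Subtype.ext
          show (r y).1 = (r y').1
          rw [hr]
          simp only [dif_neg hyA, dif_pos hy'A]
          exact h2.symm
        · exact absurd (h2 ▸ hx0A) hyA
      · left
        apply Subtype.ext
        show (r y).1 = (r y').1
        rw [hr]
        simp only [dif_neg hyA, dif_neg hy'A]
  · -- one-step
    intro x
    rcases hqs ⟨x.1, hAX x.2⟩ with h1 | h1
    · left
      apply Subtype.ext
      show (r (q ⟨x.1, hAX x.2⟩)).1 = x.1
      rw [h1, hr]
      simp only
      rw [dif_pos (show ((⟨x.1, hAX x.2⟩ : X)).1 ∈ A from x.2)]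
    · by_cases hm : (q ⟨x.1, hAX x.2⟩).1 ∈ A
      · right
        show κ (r (q ⟨x.1, hAX x.2⟩)).1 x.1
        have : (r (q ⟨x.1, hAX x.2⟩)).1 = (q ⟨x.1, hAX x.2⟩).1 := by
          rw [hr]; simp only [dif_pos hm]
        rw [this]
        exact h1
      · have hB : (q ⟨x.1, hAX x.2⟩).1 ∈ B := (hXcov (q ⟨x.1, hAX x.2⟩).2).resolve_left hm
        rcases hwedge x.1 x.2 (q ⟨x.1, hAX x.2⟩).1 hB (hsym h1) with h2 | h2
        · left
          apply Subtype.ext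
          show (r (q ⟨x.1, hAX x.2⟩)).1 = x.1
          rw [hr]
          simp only [dif_neg hm]
          exact h2.symm
        · exact absurd (h2 ▸ hx0A) hm
  · -- formulas
    intro x
    constructor
    · intro hm
      show (r (q ⟨x.1, hAX x.2⟩)).1 = _
      rw [hr]; simp only [dif_pos hm]
    · intro hm
      show (r (q ⟨x.1, hAX x.2⟩)).1 = _
      rw [hr]; simp only [dif_neg hm]

/-- Key wedge lemma: a non-injective one-step self-map of the wedge restricts to a
non-injective one-step self-map of one of the factors. -/
lemma wedge_key {n : ℕ} (κ : ZPoint n → ZPoint n → Prop) (hsym : Symmetric κ)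
    (X A B : Set (ZPoint n)) (x₀ : ZPoint n)
    (hAX : A ⊆ X) (hBX : B ⊆ X) (hXcov : X ⊆ A ∪ B)
    (hx0A : x₀ ∈ A) (hx0B : x₀ ∈ B)
    (hint : ∀ z, z ∈ A → z ∈ B → z = x₀)
    (hwedge : ∀ x ∈ A, ∀ y ∈ B, κ x y → x = x₀ ∨ y = x₀)
    (q : X → X) (hqc : DigCont κ κ X X q)
    (hqs : ∀ x, q x = x ∨ κ (q x).1 x.1)
    (hni : ¬ Function.Injective q) :
    (∃ p : A → A, DigCont κ κ A A p ∧ (∀ x, p x = x ∨ κ (p x).1 x.1) ∧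
        ¬ Function.Injective p) ∨
    (∃ p : B → B, DigCont κ κ B B p ∧ (∀ x, p x = x ∨ κ (p x).1 x.1) ∧
        ¬ Function.Injective p) := by
  classical
  have hXcov' : X ⊆ B ∪ A := fun z hz => (hXcov hz).symm
  have hwedge' : ∀ x ∈ B, ∀ y ∈ A, κ x y → x = x₀ ∨ y = x₀ := fun x hx y hy hk =>
    (hwedge y hy x hx (hsym hk)).symm
  obtain ⟨pA, hpAc, hpAs, hpAf⟩ :=
    restrict_step κ hsym X A B x₀ hAX hXcov hx0A hwedge q hqc hqs
  obtain ⟨pB, hpBc, hpBs, hpBf⟩ :=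
    restrict_step κ hsym X B A x₀ hBX hXcov' hx0B hwedge' q hqc hqs
  obtain ⟨a, b, hqab, hab⟩ := Function.not_injective_iff.mp hni
  have hvab : a.1 ≠ b.1 := fun h => hab (Subtype.ext h)
  -- both-in-A case
  have bothA : ∀ (u v : X), u ≠ v → q u = q v → u.1 ∈ A → v.1 ∈ A →
      ¬ Function.Injective pA := by
    intro u v huv hquv huA hvA hinj
    have e1 : (⟨(⟨u.1, huA⟩ : A).1, hAX (⟨u.1, huA⟩ : A).2⟩ : X) = u := Subtype.ext rfl
    have e2 : (⟨(⟨v.1, hvA⟩ : A).1, hAX (⟨v.1, hvA⟩ : A).2⟩ : X) = v := Subtype.ext rfl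
    have hval : (pA ⟨u.1, huA⟩).1 = (pA ⟨v.1, hvA⟩).1 := by
      by_cases hm : (q u).1 ∈ A
      · have h1 := (hpAf ⟨u.1, huA⟩).1 (by rw [e1]; exact hm)
        have h2 := (hpAf ⟨v.1, hvA⟩).1 (by rw [e2, ← hquv]; exact hm)
        rw [h1, h2, e1, e2, hquv]
      · have h1 := (hpAf ⟨u.1, huA⟩).2 (by rw [e1]; exact hm)
        have h2 := (hpAf ⟨v.1, hvA⟩).2 (by rw [e2, ← hquv]; exact hm)
        rw [h1, h2]
    have : (⟨u.1, huA⟩ : A) = ⟨v.1, hvA⟩ := hinj (Subtype.ext hval)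
    exact huv (Subtype.ext (show u.1 = v.1 from congrArg (fun w : A => w.1) this))
  have bothB : ∀ (u v : X), u ≠ v → q u = q v → u.1 ∈ B → v.1 ∈ B →
      ¬ Function.Injective pB := by
    intro u v huv hquv huB hvB hinj
    have e1 : (⟨(⟨u.1, huB⟩ : B).1, hBX (⟨u.1, huB⟩ : B).2⟩ : X) = u := Subtype.ext rfl
    have e2 : (⟨(⟨v.1, hvB⟩ : B).1, hBX (⟨v.1, hvB⟩ : B).2⟩ : X) = v := Subtype.ext rfl
    have hval : (pB ⟨u.1, huB⟩).1 = (pB ⟨v.1, hvB⟩).1 := by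
      by_cases hm : (q u).1 ∈ B
      · have h1 := (hpBf ⟨u.1, huB⟩).1 (by rw [e1]; exact hm)
        have h2 := (hpBf ⟨v.1, hvB⟩).1 (by rw [e2, ← hquv]; exact hm)
        rw [h1, h2, e1, e2, hquv]
      · have h1 := (hpBf ⟨u.1, huB⟩).2 (by rw [e1]; exact hm)
        have h2 := (hpBf ⟨v.1, hvB⟩).2 (by rw [e2, ← hquv]; exact hm)
        rw [h1, h2]
    have : (⟨u.1, huB⟩ : B) = ⟨v.1, hvB⟩ := hinj (Subtype.ext hval)
    exact huv (Subtype.ext (show u.1 = v.1 from congrArg (fun w : B => w.1) this))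
  -- escape lemmas
  have escapeA : ∀ x : X, x.1 ∈ A → x.1 ≠ x₀ → (q x).1 ∈ A := by
    intro x hxA hne
    rcases hqs x with h1 | h1
    · rw [h1]; exact hxA
    · by_contra hno
      have hB : (q x).1 ∈ B := (hXcov (q x).2).resolve_left hno
      rcases hwedge x.1 hxA (q x).1 hB (hsym h1) with h2 | h2
      · exact hne h2
      · exact hno (h2 ▸ hx0A)
  have escapeB : ∀ x : X, x.1 ∈ B → x.1 ≠ x₀ → (q x).1 ∈ B := by
    intro x hxB hne
    rcases hqs x with h1 | h1
    · rw [h1]; exact hxB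
    · by_contra hno
      have hA : (q x).1 ∈ A := (hXcov' (q x).2).resolve_left hno
      rcases hwedge' x.1 hxB (q x).1 hA (hsym h1) with h2 | h2
      · exact hne h2
      · exact hno (h2 ▸ hx0B)
  -- mixed case
  have mixed : ∀ (u v : X), u ≠ v → q u = q v → u.1 ∈ A → u.1 ∉ B → v.1 ∈ B → v.1 ∉ A →
      (¬ Function.Injective pA) ∨ (¬ Function.Injective pB) := by
    intro u v huv hquv huA huB hvB hvA
    have hune : u.1 ≠ x₀ := fun h => huB (h ▸ hx0B)
    have hvne : v.1 ≠ x₀ := fun h => hvA (h ▸ hx0A)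
    have hquA : (q u).1 ∈ A := escapeA u huA hune
    have hqvB : (q v).1 ∈ B := escapeB v hvB hvne
    have hqu0 : (q u).1 = x₀ := hint _ hquA (by rw [hquv]; exact hqvB)
    have hqv0 : (q v).1 = x₀ := by rw [← hquv]; exact hqu0
    set z₀ : X := ⟨x₀, hAX hx0A⟩ with hz₀
    by_cases hz : (q z₀).1 ∈ A
    · -- pB is non-injective: pB at v and at x₀ both equal x₀
      right
      intro hinj
      have ev : (⟨(⟨v.1, hvB⟩ : B).1, hBX (⟨v.1, hvB⟩ : B).2⟩ : X) = v := Subtype.ext rfl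
      have h1 : (pB ⟨v.1, hvB⟩).1 = x₀ := by
        have := (hpBf ⟨v.1, hvB⟩).1 (by rw [ev, hqv0]; exact hx0B)
        rw [this, ev, hqv0]
      have ez : (⟨(⟨x₀, hx0B⟩ : B).1, hBX (⟨x₀, hx0B⟩ : B).2⟩ : X) = z₀ := Subtype.ext rfl
      have h2 : (pB ⟨x₀, hx0B⟩).1 = x₀ := by
        by_cases hzB : (q z₀).1 ∈ B
        · have h3 := (hpBf ⟨x₀, hx0B⟩).1 (by rw [ez]; exact hzB)
          rw [h3, ez]
          exact hint _ hz hzB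
        · exact (hpBf ⟨x₀, hx0B⟩).2 (by rw [ez]; exact hzB)
      have : (⟨v.1, hvB⟩ : B) = ⟨x₀, hx0B⟩ := hinj (Subtype.ext (h1.trans h2.symm))
      exact hvne (congrArg Subtype.val this)
    · -- pA is non-injective: pA at u and at x₀ both equal x₀
      left
      intro hinj
      have eu : (⟨(⟨u.1, huA⟩ : A).1, hAX (⟨u.1, huA⟩ : A).2⟩ : X) = u := Subtype.ext rfl
      have h1 : (pA ⟨u.1, huA⟩).1 = x₀ := by
        have := (hpAf ⟨u.1, huA⟩).1 (by rw [eu, hqu0]; exact hx0A)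
        rw [this, eu, hqu0]
      have ez : (⟨(⟨x₀, hx0A⟩ : A).1, hAX (⟨x₀, hx0A⟩ : A).2⟩ : X) = z₀ := Subtype.ext rfl
      have h2 : (pA ⟨x₀, hx0A⟩).1 = x₀ := (hpAf ⟨x₀, hx0A⟩).2 (by rw [ez]; exact hz)
      have : (⟨u.1, huA⟩ : A) = ⟨x₀, hx0A⟩ := hinj (Subtype.ext (h1.trans h2.symm))
      exact hune (congrArg Subtype.val this)
  -- case analysis
  by_cases haA : a.1 ∈ A <;> by_cases hbA : b.1 ∈ A
  · exact Or.inl ⟨pA, hpAc, hpAs, bothA a b hab hqab haA hbA⟩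
  · have hbB : b.1 ∈ B := (hXcov b.2).resolve_left hbA
    by_cases haB : a.1 ∈ B
    · exact Or.inr ⟨pB, hpBc, hpBs, bothB a b hab hqab haB hbB⟩
    · rcases mixed a b hab hqab haA haB hbB hbA with h | h
      · exact Or.inl ⟨pA, hpAc, hpAs, h⟩
      · exact Or.inr ⟨pB, hpBc, hpBs, h⟩
  · have haB : a.1 ∈ B := (hXcov a.2).resolve_left haA
    by_cases hbB : b.1 ∈ B
    · exact Or.inr ⟨pB, hpBc, hpBs, bothB a b hab hqab haB hbB⟩
    · rcases mixed b a hab.symm hqab.symm hbA hbB haB haA with h | h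
      · exact Or.inl ⟨pA, hpAc, hpAs, h⟩
      · exact Or.inr ⟨pB, hpBc, hpBs, h⟩
  · have haB : a.1 ∈ B := (hXcov a.2).resolve_left haA
    have hbB : b.1 ∈ B := (hXcov b.2).resolve_left hbA
    exact Or.inr ⟨pB, hpBc, hpBs, bothB a b hab hqab haB hbB⟩

end WedgeLemmas
/-- A wedge of two finite irreducible digital images, each with more
than one point, is irreducible. -/
theorem wedge_irreducible
    {n : ℕ} (κ : ZPoint n → ZPoint n → Prop)
    (hsym : Symmetric κ) (hirr : Irreflexive κ)
    (X₀ X₁ : Set (ZPoint n)) (x₀ : ZPoint n)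
    (hfin₀ : X₀.Finite) (hfin₁ : X₁.Finite)
    (hcard₀ : 1 < X₀.ncard) (hcard₁ : 1 < X₁.ncard)
    (hint : X₀ ∩ X₁ = {x₀})
    (hwedge : ∀ x ∈ X₀, ∀ y ∈ X₁, κ x y → x = x₀ ∨ y = x₀)
    (h₀ : ¬ Reducible κ X₀) (h₁ : ¬ Reducible κ X₁) :
    ¬ Reducible κ (X₀ ∪ X₁) := by
  intro hred
  classical
  obtain ⟨k, Y, lam, hlsym, hlirr, hYfin, hlt, f, g, hfc, hgc, hgf, hfg⟩ := hred
  haveI : Finite ↥Y := hYfin.to_subtype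
  have hXfin : (X₀ ∪ X₁).Finite := hfin₀.union hfin₁
  have hni : ¬ Function.Injective (g ∘ f) := by
    intro hinj
    have hfinj : Function.Injective f := Function.Injective.of_comp hinj
    have hle := Nat.card_le_card_of_injective f hfinj
    rw [Nat.card_coe_set_eq, Nat.card_coe_set_eq] at hle
    omega
  obtain ⟨q, hqc, hqs, hqni⟩ := exists_step_of_htpy κ (X₀ ∪ X₁) hXfin (g ∘ f) hni hgf
  have hx0 : x₀ ∈ X₀ ∩ X₁ := by rw [hint]; exact Set.mem_singleton _
  have hintz : ∀ z, z ∈ X₀ → z ∈ X₁ → z = x₀ := by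
    intro z hz0 hz1
    have : z ∈ X₀ ∩ X₁ := ⟨hz0, hz1⟩
    rwa [hint, Set.mem_singleton_iff] at this
  rcases wedge_key κ hsym (X₀ ∪ X₁) X₀ X₁ x₀ Set.subset_union_left Set.subset_union_right
      (fun z hz => hz) hx0.1 hx0.2 hintz hwedge q hqc hqs hqni with
    ⟨p, hc, hs, hn⟩ | ⟨p, hc, hs, hn⟩
  · exact h₀ (reducible_of_step κ hsym hirr X₀ hfin₀ p hc hs hn)
  · exact h₁ (reducible_of_step κ hsym hirr X₁ hfin₁ p hc hs hn)
end

section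
/- Let (X, κ) = (X_0, κ) ∨ (X_1, κ) be a wedge of digital images with wedge point x_0, where #X_0 > 1 and #X_1 > 1, and (X_0, κ) and (X_1, κ) are both connected. If X_0 and X_1 are both rigid, then X is rigid. -/
/-- A continuous 1-map is homotopic to the identity (in one step). -/
lemma htpy_id_of_onemap_aux {n : ℕ} (κ : ZPoint n → ZPoint n → Prop) (X : Set (ZPoint n))
    (g : X → X) (hg : DigCont κ κ X X g)
    (hstep : ∀ x : X, id x = g x ∨ κ (id x : X).1 (g x).1) :
    Htpy κ κ X X id g := by
  refine ⟨1, fun x t => if t = 0 then x else g x, ?_, ?_, ?_, ?_⟩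
  · intro x; simp
  · intro x; simp
  · intro x t ht
    interval_cases t
    simpa using hstep x
  · intro t _ x x' hadj
    by_cases h : t = 0
    · subst h
      simp only [if_pos rfl]
      exact Or.inr hadj
    · simp only [if_neg h]
      exact hg x x' hadj

/-- If a continuous 1-map on `X ⊇ A` sends the wedge point into `A`, it fixes `A`. -/
lemma side_fix_aux {n : ℕ} (κ : ZPoint n → ZPoint n → Prop) (hsym : Symmetric κ)
    (A B X : Set (ZPoint n)) (x₀ : ZPoint n)
    (hAX : A ⊆ X) (hXAB : ∀ x ∈ X, x ∈ A ∨ x ∈ B)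
    (hx₀A : x₀ ∈ A)
    (hwedge : ∀ x ∈ A, ∀ y ∈ B, κ x y → x = x₀ ∨ y = x₀)
    (hA : Rigid κ A)
    (g : X → X) (hg : DigCont κ κ X X g)
    (hstep : ∀ x : X, g x = x ∨ κ (g x).1 x.1)
    (hgx₀ : (g ⟨x₀, hAX hx₀A⟩).1 ∈ A) :
    ∀ x : X, x.1 ∈ A → (g x).1 = x.1 := by
  have mem : ∀ x : X, x.1 ∈ A → (g x).1 ∈ A := by
    intro x hx
    rcases hstep x with h | h
    · rw [h]; exact hx
    · rcases hXAB _ (g x).2 with hA' | hB'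
      · exact hA'
      · rcases hwedge x.1 hx (g x).1 hB' (hsym h) with h1 | h2
        · have hxeq : x = (⟨x₀, hAX hx₀A⟩ : X) := Subtype.ext h1
          rw [hxeq]; exact hgx₀
        · rw [h2]; exact hx₀A
  set g' : A → A := fun a => ⟨(g ⟨a.1, hAX a.2⟩).1, mem _ a.2⟩ with hg'
  have hcont : DigCont κ κ A A g' := by
    intro a a' hadj
    rcases hg ⟨a.1, hAX a.2⟩ ⟨a'.1, hAX a'.2⟩ hadj with h | h
    · left
      apply Subtype.ext
      show (g ⟨a.1, hAX a.2⟩).1 = (g ⟨a'.1, hAX a'.2⟩).1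
      exact congrArg Subtype.val h
    · right; exact h
  have hstep' : ∀ a : A, id a = g' a ∨ κ (id a : A).1 (g' a).1 := by
    intro a
    rcases hstep ⟨a.1, hAX a.2⟩ with h | h
    · left
      exact Subtype.ext (congrArg Subtype.val h).symm
    · right
      exact hsym h
  have hid : g' = id := hA g' hcont (htpy_id_of_onemap_aux κ A g' hcont hstep')
  intro x hx
  have h1 : g' ⟨x.1, hx⟩ = ⟨x.1, hx⟩ := congrFun hid ⟨x.1, hx⟩
  have h2 := congrArg Subtype.val h1
  have h3 : (⟨x.1, hAX hx⟩ : X) = x := Subtype.ext rfl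
  calc (g x).1 = (g ⟨x.1, hAX hx⟩).1 := by rw [h3]
    _ = x.1 := h2

/-- A continuous 1-map on a wedge of rigid images is the identity. -/
lemma onemap_eq_id_aux {n : ℕ} (κ : ZPoint n → ZPoint n → Prop)
    (hsym : Symmetric κ)
    (X₀ X₁ : Set (ZPoint n)) (x₀ : ZPoint n)
    (hint : X₀ ∩ X₁ = {x₀})
    (hwedge : ∀ x ∈ X₀, ∀ y ∈ X₁, κ x y → x = x₀ ∨ y = x₀)
    (h₀ : Rigid κ X₀) (h₁ : Rigid κ X₁)
    (g : ↥(X₀ ∪ X₁) → ↥(X₀ ∪ X₁)) (hg : DigCont κ κ (X₀ ∪ X₁) (X₀ ∪ X₁) g)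
    (hstep : ∀ x : ↥(X₀ ∪ X₁), g x = x ∨ κ (g x).1 x.1) :
    g = id := by
  have hx₀both : x₀ ∈ X₀ ∩ X₁ := by rw [hint]; rfl
  have hx₀0 : x₀ ∈ X₀ := hx₀both.1
  have hx₀1 : x₀ ∈ X₁ := hx₀both.2
  have hwedge' : ∀ x ∈ X₁, ∀ y ∈ X₀, κ x y → x = x₀ ∨ y = x₀ := by
    intro x hx y hy hxy
    exact (hwedge y hy x hx (hsym hxy)).symm
  have hXAB : ∀ x ∈ X₀ ∪ X₁, x ∈ X₀ ∨ x ∈ X₁ := fun x hx => hx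
  have hXBA : ∀ x ∈ X₀ ∪ X₁, x ∈ X₁ ∨ x ∈ X₀ := fun x hx => hx.symm
  have hsub0 : X₀ ⊆ X₀ ∪ X₁ := Set.subset_union_left
  have hsub1 : X₁ ⊆ X₀ ∪ X₁ := Set.subset_union_right
  set xb : ↥(X₀ ∪ X₁) := ⟨x₀, hsub0 hx₀0⟩ with hxb
  have key : (∀ x : ↥(X₀ ∪ X₁), x.1 ∈ X₀ → (g x).1 = x.1) ∧
      (∀ x : ↥(X₀ ∪ X₁), x.1 ∈ X₁ → (g x).1 = x.1) := by
    rcases (g xb).2 with hc | hc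
    · have k0 := side_fix_aux κ hsym X₀ X₁ (X₀ ∪ X₁) x₀ hsub0 hXAB hx₀0 hwedge h₀ g hg hstep hc
      have hfix : (g xb).1 = x₀ := k0 xb hx₀0
      have hc1 : (g xb).1 ∈ X₁ := by rw [hfix]; exact hx₀1
      have k1 := side_fix_aux κ hsym X₁ X₀ (X₀ ∪ X₁) x₀ hsub1 hXBA hx₀1 hwedge' h₁ g hg hstep hc1
      exact ⟨k0, k1⟩
    · have k1 := side_fix_aux κ hsym X₁ X₀ (X₀ ∪ X₁) x₀ hsub1 hXBA hx₀1 hwedge' h₁ g hg hstep hc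
      have hfix : (g xb).1 = x₀ := k1 xb hx₀1
      have hc0 : (g xb).1 ∈ X₀ := by rw [hfix]; exact hx₀0
      have k0 := side_fix_aux κ hsym X₀ X₁ (X₀ ∪ X₁) x₀ hsub0 hXAB hx₀0 hwedge h₀ g hg hstep hc0
      exact ⟨k0, k1⟩
  funext x
  apply Subtype.ext
  rcases x.2 with h | h
  · exact key.1 x h
  · exact key.2 x h

/-- A wedge of two connected rigid digital images, each with more than
one point, is rigid. -/
theorem wedge_rigid
    {n : ℕ} (κ : ZPoint n → ZPoint n → Prop)
    (hsym : Symmetric κ) (hirr : Irreflexive κ)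
    (X₀ X₁ : Set (ZPoint n)) (x₀ : ZPoint n)
    (hcard₀ : X₀.Nontrivial) (hcard₁ : X₁.Nontrivial)
    (hconn₀ : DigConnected κ X₀) (hconn₁ : DigConnected κ X₁)
    (hint : X₀ ∩ X₁ = {x₀})
    (hwedge : ∀ x ∈ X₀, ∀ y ∈ X₁, κ x y → x = x₀ ∨ y = x₀)
    (h₀ : Rigid κ X₀) (h₁ : Rigid κ X₁) :
    Rigid κ (X₀ ∪ X₁) := by
  intro f hf hhtpy
  obtain ⟨m, F, h0, hm, hstepF, hcont⟩ := hhtpy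
  have main : ∀ t, t ≤ m → (fun x => F x t) = id := by
    intro t
    induction t with
    | zero =>
      intro _
      funext x
      exact h0 x
    | succ t ih =>
      intro ht
      have hid := ih (Nat.le_of_succ_le ht)
      have hgcont := hcont (t + 1) ht
      refine onemap_eq_id_aux κ hsym X₀ X₁ x₀ hint hwedge h₀ h₁
        (fun x => F x (t + 1)) hgcont ?_
      intro x
      have hs := hstepF x t (Nat.lt_of_succ_le ht)
      have hx : F x t = x := congrFun hid x
      rw [hx] at hs
      rcases hs with h | h
      · exact Or.inl h.symm
      · exact Or.inr (hsym h)
  funext x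
  have := congrFun (main m le_rfl) x
  rw [← hm x]
  exact this
end

section
/- Let (X, κ) = (Y, κ) ∨ (S, κ), where Y is finite with #Y > 1, (Y, κ) is irreducible, and (S, κ) is a digital simple closed curve of at least 5 points. Then (X, κ) is irreducible. -/
/-! If `Y ∨ S` were homotopy equivalent to a smaller image, the composite `h = g ∘ f` would be
homotopic to the identity and miss some point `p`. Collapsing the other summand to `x₀` turns `h`
into self-maps of `Y` and of `S` homotopic to their identities. On a simple closed curve with at
least five points each step of a homotopy takes rotations to rotations, so the map on `S` is a
bijection. If `p ∈ S \ {x₀}` it misses `p`. If `p = x₀`, the point of `S` it sends to `x₀` is sent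
by `h` into `Y \ {x₀}`, while its neighbours go to `S \ {x₀}`, which continuity across the wedge
forbids. If `p ∈ Y \ {x₀}`, the map on `Y` misses `p`; a non-surjective self-map of a finite image
homotopic to the identity has an idempotent iterate, a retraction onto a proper subset that is a
homotopy equivalence, so `Y` would be reducible. -/

section Homotopy

variable {α β γ : Type*} {κ : α → α → Prop} {lam : β → β → Prop} {mu : γ → γ → Prop}
  {X : Set α} {Y : Set β} {Z : Set γ}

theorem digCont_id : DigCont κ κ X X id := fun _ _ h => Or.inr h

theorem DigCont.comp {f : X → Y} {g : Y → Z} (hf : DigCont κ lam X Y f)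
    (hg : DigCont lam mu Y Z g) : DigCont κ mu X Z (g ∘ f) := by
  intro x x' hx
  rcases hf x x' hx with h | h
  · exact Or.inl (congrArg g h)
  · exact hg _ _ h

theorem DigCont.iterate {G : X → X} (hG : DigCont κ κ X X G) (k : ℕ) :
    DigCont κ κ X X G^[k] := by
  induction k with
  | zero => exact digCont_id
  | succ k ih => rw [Function.iterate_succ]; exact hG.comp ih

theorem Htpy.refl {f : X → Y} (hf : DigCont κ lam X Y f) : Htpy κ lam X Y f f :=
  ⟨0, fun x _ => f x, fun _ => rfl, fun _ => rfl, fun _ _ h => absurd h (Nat.not_lt_zero _),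
    fun _ _ => hf⟩

theorem Htpy.symm (hlam : Symmetric lam) {f g : X → Y} (h : Htpy κ lam X Y f g) :
    Htpy κ lam X Y g f := by
  obtain ⟨m, F, h0, hm, hstep, hcont⟩ := h
  refine ⟨m, fun x t => F x (m - t), by simp [hm], by simp [h0], ?_,
    fun t _ => hcont (m - t) (Nat.sub_le m t)⟩
  intro x t ht
  have hsucc : m - t = m - (t + 1) + 1 := by omega
  dsimp only
  rw [hsucc]
  exact (hstep x (m - (t + 1)) (by omega)).imp Eq.symm (fun h => hlam h)

theorem Htpy.trans {f g h : X → Y} (h₁ : Htpy κ lam X Y f g) (h₂ : Htpy κ lam X Y g h) :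
    Htpy κ lam X Y f h := by
  obtain ⟨m₁, F₁, F₁0, F₁m, F₁s, F₁c⟩ := h₁
  obtain ⟨m₂, F₂, F₂0, F₂m, F₂s, F₂c⟩ := h₂
  refine ⟨m₁ + m₂, fun x t => if t ≤ m₁ then F₁ x t else F₂ x (t - m₁), ?_, ?_, ?_, ?_⟩
  · simp [F₁0]
  · intro x
    rcases Nat.eq_zero_or_pos m₂ with hm | hm
    · simp [hm, F₁m, ← F₂0, ← F₂m]
    · simp [show ¬m₁ + m₂ ≤ m₁ by omega, F₂m]
  · intro x t ht
    by_cases hlt : t < m₁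
    · simpa [hlt.le, hlt] using F₁s x t hlt
    by_cases heq : t = m₁
    · subst heq
      simpa [F₁m, ← F₂0] using F₂s x 0 (by omega)
    · simpa [show ¬t ≤ m₁ by omega, show ¬t + 1 ≤ m₁ by omega,
        show t + 1 - m₁ = t - m₁ + 1 by omega] using F₂s x (t - m₁) (by omega)
  · intro t ht
    by_cases h : t ≤ m₁
    · simpa [h] using F₁c t h
    · simpa [h] using F₂c (t - m₁) (by omega)

theorem Htpy.comp_left {f g : X → Y} {φ : Y → Z} (hφ : DigCont lam mu Y Z φ)
    (h : Htpy κ lam X Y f g) : Htpy κ mu X Z (φ ∘ f) (φ ∘ g) := by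
  obtain ⟨m, F, h0, hm, hstep, hcont⟩ := h
  refine ⟨m, fun x t => φ (F x t), by simp [h0], by simp [hm], ?_,
    fun t ht => (hcont t ht).comp hφ⟩
  intro x t ht
  rcases hstep x t ht with h | h
  · exact Or.inl (congrArg φ h)
  · exact hφ _ _ h

theorem Htpy.comp_right {f g : Y → Z} {ψ : X → Y} (hψ : DigCont κ lam X Y ψ)
    (h : Htpy lam mu Y Z f g) : Htpy κ mu X Z (f ∘ ψ) (g ∘ ψ) := by
  obtain ⟨m, F, h0, hm, hstep, hcont⟩ := h
  exact ⟨m, fun x t => F (ψ x) t, fun x => h0 (ψ x), fun x => hm (ψ x),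
    fun x => hstep (ψ x), fun t ht => hψ.comp (hcont t ht)⟩

theorem Htpy.iterate {G : X → X} (hG : DigCont κ κ X X G) (hH : Htpy κ κ X X id G) (k : ℕ) :
    Htpy κ κ X X id G^[k] := by
  induction k with
  | zero => exact Htpy.refl digCont_id
  | succ k ih =>
    rw [Function.iterate_succ']
    exact ih.trans (hH.comp_right (hG.iterate k))

end Homotopy

theorem Function.exists_iterate_idempotent {β : Type*} [Finite β] (G : β → β) :
    ∃ N, 0 < N ∧ G^[N] ∘ G^[N] = G^[N] := by
  obtain ⟨i, j, hne, heq⟩ := Finite.exists_ne_map_eq_of_infinite (fun k : ℕ => G^[k])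
  wlog hij : i < j generalizing i j
  · exact this j i hne.symm heq.symm (by omega)
  have hperiod : ∀ t k, i ≤ k → G^[k + t * (j - i)] = G^[k] := by
    intro t
    induction t with
    | zero => simp
    | succ t ih =>
      intro k hk
      have hsplit : k + (t + 1) * (j - i) = (k + t * (j - i) - i) + j := by
        rw [add_mul, one_mul]; omega
      rw [hsplit, Function.iterate_add, ← heq, ← Function.iterate_add,
        show k + t * (j - i) - i + i = k + t * (j - i) by omega, ih k hk]
  refine ⟨(i + 1) * (j - i), Nat.mul_pos i.succ_pos (by omega), ?_⟩
  rw [← Function.iterate_add]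
  exact hperiod _ _ (by nlinarith [show 1 ≤ j - i by omega])

theorem reducible_of_htpy_id_of_not_surjective {n : ℕ} {κ : ZPoint n → ZPoint n → Prop}
    (hsym : Symmetric κ) (hirr : Irreflexive κ) {Y : Set (ZPoint n)} (hfin : Y.Finite)
    {G : Y → Y} (hG : DigCont κ κ Y Y G) (hH : Htpy κ κ Y Y id G)
    (hns : ¬ Function.Surjective G) : Reducible κ Y := by
  have := hfin.to_subtype
  obtain ⟨N, hN, hidem⟩ := Function.exists_iterate_idempotent G
  have hrange : Set.range G^[N] ⊆ Set.range G := by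
    obtain ⟨M, rfl⟩ := Nat.exists_eq_add_one_of_ne_zero hN.ne'
    rw [Function.iterate_succ']
    exact Set.range_comp_subset_range _ _
  have he := hG.iterate N
  have hHe := hH.iterate hG N
  generalize G^[N] = e at hidem hrange he hHe
  obtain ⟨p, hp⟩ := not_forall.mp hns
  set A : Set (ZPoint n) := Set.range fun y => (e y).1
  have hAY : A ⊆ Y := by rintro _ ⟨y, rfl⟩; exact (e y).2
  have hpA : p.1 ∉ A := by
    rintro ⟨y, hy⟩
    exact hp (hrange ⟨y, Subtype.ext hy⟩)
  -- `e` is an idempotent map homotopic to `id`, so it is a homotopy equivalence onto its image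
  let r : Y → A := fun y => ⟨(e y).1, y, rfl⟩
  have hr : Set.inclusion hAY ∘ r = e := rfl
  have hrinc : r ∘ Set.inclusion hAY = id := by
    funext ⟨_, y, rfl⟩
    exact Subtype.ext (show (e (e y)).1 = (e y).1 from congrArg Subtype.val (congrFun hidem y))
  refine ⟨n, A, κ, hsym, hirr, hfin.subset hAY,
    Set.ncard_lt_ncard ⟨hAY, fun hYA => hpA (hYA p.2)⟩ hfin,
    r, Set.inclusion hAY, ?_, fun _ _ h => Or.inr h, ?_, ?_⟩
  · intro y y' h
    rcases he y y' h with h | h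
    · exact Or.inl (Subtype.ext (show (e y).1 = (e y').1 by rw [h]))
    · exact Or.inr h
  · rw [hr]; exact hHe.symm hsym
  · rw [hrinc]; exact Htpy.refl digCont_id

theorem Int.eq_zero_of_abs_lt_of_cast_zmod_eq_zero {m : ℕ} {a : ℤ} (ha : |a| < m)
    (h : (a : ZMod m) = 0) : a = 0 :=
  Int.eq_zero_of_abs_lt_dvd ((ZMod.intCast_zmod_eq_zero_iff_dvd a m).mp h) ha

theorem ZMod.apply_eq_apply_zero_of_forall_add_one_le {m : ℕ} [NeZero m] {β : Type*}
    [AddCommMonoid β] [PartialOrder β] [IsOrderedCancelAddMonoid β] {E : ZMod m → β}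
    (hE : ∀ i, E (i + 1) ≤ E i) (i : ZMod m) : E i = E 0 := by
  have hsum : ∑ i, E (i + 1) = ∑ i, E i :=
    Fintype.sum_equiv (Equiv.addRight 1) _ _ fun _ => rfl
  have hstep := (Finset.sum_eq_sum_iff_of_le fun i _ => hE i).mp hsum
  rw [← ZMod.natCast_zmod_val i]
  induction i.val with
  | zero => simp
  | succ k ih => rw [Nat.cast_succ, hstep _ (Finset.mem_univ _), ih]

section Cycle

variable {α : Type*} {κ : α → α → Prop} {m : ℕ} {s : ZMod m → α}

def IsRotation (s : ZMod m → α) (f : Set.range s → Set.range s) : Prop :=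
  ∃ a : ZMod m, ∀ i, (f ⟨s i, Set.mem_range_self i⟩).1 = s (i + a)

variable (hinj : Function.Injective s)
  (hadj : ∀ i j : ZMod m, κ (s i) (s j) ↔ (j = i + 1 ∨ j = i - 1))
include hinj hadj

theorem exists_eq_add_of_eq_or_adj {i j : ZMod m} (h : s i = s j ∨ κ (s i) (s j)) :
    ∃ ε : ℤ, |ε| ≤ 1 ∧ j = i + ε := by
  rcases h with h | h
  · exact ⟨0, by simp, by simp [hinj h]⟩
  rcases (hadj i j).mp h with rfl | rfl
  · exact ⟨1, by simp, by simp⟩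
  · exact ⟨-1, by simp, by simp [sub_eq_add_neg]⟩

theorem IsRotation.of_eq_or_adj (hm : 5 ≤ m) {f f' : Set.range s → Set.range s}
    (hf : IsRotation s f) (hcont : DigCont κ κ _ _ f')
    (hnear : ∀ x, f x = f' x ∨ κ (f x).1 (f' x).1) : IsRotation s f' := by
  have : NeZero m := ⟨by omega⟩
  obtain ⟨a, ha⟩ := hf
  have hdisp : ∀ i, ∃ e : ℤ, |e| ≤ 1 ∧ (f' ⟨s i, Set.mem_range_self i⟩).1 = s (i + a + e) := by
    intro i
    obtain ⟨j, hj⟩ := (f' ⟨s i, Set.mem_range_self i⟩).2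
    have hnear_i := (hnear ⟨s i, Set.mem_range_self i⟩).imp (congrArg Subtype.val) id
    rw [ha, ← hj] at hnear_i
    obtain ⟨ε, hε, rfl⟩ := exists_eq_add_of_eq_or_adj hinj hadj hnear_i
    exact ⟨ε, hε, hj.symm⟩
  choose E hE hfE using hdisp
  -- by continuity the displacement `E` can only drop along the curve (this needs `5 ≤ m`);
  -- being periodic, it is then constant
  have hmono : ∀ i, E (i + 1) ≤ E i := by
    intro i
    have hcont_i := (hcont ⟨s i, Set.mem_range_self i⟩ ⟨s (i + 1), Set.mem_range_self _⟩
      ((hadj _ _).mpr (Or.inl rfl))).imp (congrArg Subtype.val) id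
    rw [hfE, hfE] at hcont_i
    obtain ⟨ε, hε, hij⟩ := exists_eq_add_of_eq_or_adj hinj hadj hcont_i
    have hcast : ((1 + E (i + 1) - E i - ε : ℤ) : ZMod m) = 0 := by
      push_cast
      linear_combination hij
    have := abs_le.mp (hE i); have := abs_le.mp (hE (i + 1)); have := abs_le.mp hε
    have := Int.eq_zero_of_abs_lt_of_cast_zmod_eq_zero (by rw [abs_lt]; constructor <;> omega) hcast
    omega
  refine ⟨a + E 0, fun i => ?_⟩
  rw [hfE, ZMod.apply_eq_apply_zero_of_forall_add_one_le hmono i, add_assoc]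

theorem HtpyN.isRotation (hm : 5 ≤ m) {M : ℕ} {f : Set.range s → Set.range s}
    (hH : HtpyN κ κ _ _ M id f) : IsRotation s f := by
  obtain ⟨F, h0, hM, hstep, hcont⟩ := hH
  have key : ∀ t ≤ M, IsRotation s (fun x => F x t) := by
    intro t
    induction t with
    | zero => exact fun _ => ⟨0, fun i => by simp [h0]⟩
    | succ t ih =>
      intro ht
      exact (ih (by omega)).of_eq_or_adj hinj hadj hm (hcont _ ht) fun x => hstep x t ht
  simpa [hM] using key M le_rfl

end Cycle

theorem IsRotation.bijective {α : Type*} {m : ℕ} [NeZero m] {s : ZMod m → α}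
    {f : Set.range s → Set.range s} (hf : IsRotation s f) : Function.Bijective f := by
  obtain ⟨a, ha⟩ := hf
  have hsurj : Function.Surjective f := by
    rintro ⟨_, j, rfl⟩
    exact ⟨⟨s (j - a), Set.mem_range_self _⟩, Subtype.ext (by simp [ha])⟩
  exact ⟨Finite.injective_iff_surjective.mpr hsurj, hsurj⟩

namespace IsSimpleClosedCurve

variable {α : Type*} {κ : α → α → Prop} {S : Set α} {m : ℕ}

theorem bijective_of_htpy_id (hS : IsSimpleClosedCurve κ S m) (hm : 5 ≤ m) {φ : S → S}
    (hφ : Htpy κ κ S S id φ) : Function.Bijective φ := by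
  have : NeZero m := ⟨by omega⟩
  obtain ⟨s, hinj, rfl, hadj⟩ := hS
  obtain ⟨M, hM⟩ := hφ
  exact (hM.isRotation hinj hadj hm).bijective

theorem exists_adj (hS : IsSimpleClosedCurve κ S m) : ∀ x ∈ S, ∃ y ∈ S, κ x y := by
  obtain ⟨s, -, rfl, hadj⟩ := hS
  rintro _ ⟨i, rfl⟩
  exact ⟨s (i + 1), Set.mem_range_self _, (hadj _ _).mpr (Or.inl rfl)⟩

end IsSimpleClosedCurve

section Wedge

variable {α : Type*} {κ : α → α → Prop} {X A : Set α}

open Classical in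
noncomputable def retractTo (A : Set α) (a₀ : A) (x : X) : A :=
  if h : x.1 ∈ A then ⟨x.1, h⟩ else a₀

theorem retractTo_of_mem {a₀ : A} {x : X} (h : x.1 ∈ A) : retractTo A a₀ x = ⟨x.1, h⟩ :=
  dif_pos h

theorem retractTo_of_notMem {a₀ : A} {x : X} (h : x.1 ∉ A) : retractTo A a₀ x = a₀ :=
  dif_neg h

theorem retractTo_comp_inclusion (a₀ : A) (hAX : A ⊆ X) :
    retractTo A a₀ ∘ Set.inclusion hAX = id :=
  funext fun a => retractTo_of_mem (a₀ := a₀) a.2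

theorem digCont_inclusion (hAX : A ⊆ X) : DigCont κ κ A X (Set.inclusion hAX) :=
  fun _ _ h => Or.inr h

theorem digCont_retractTo (hsym : Symmetric κ) {a₀ : A}
    (hsep : ∀ x ∈ A, ∀ y ∈ X, y ∉ A → κ x y → x = a₀) :
    DigCont κ κ X A (retractTo A a₀) := by
  intro x x' h
  by_cases hx : x.1 ∈ A <;> by_cases hx' : x'.1 ∈ A
  · right; rwa [retractTo_of_mem hx, retractTo_of_mem hx']
  · left; rw [retractTo_of_mem hx, retractTo_of_notMem hx']
    exact Subtype.ext (hsep _ hx _ x'.2 hx' h)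
  · left; rw [retractTo_of_notMem hx, retractTo_of_mem hx']
    exact Subtype.ext (hsep _ hx' _ x.2 hx (hsym h)).symm
  · left; rw [retractTo_of_notMem hx, retractTo_of_notMem hx']

theorem Htpy.retractTo_comp_comp_inclusion (hsym : Symmetric κ) {a₀ : A}
    (hsep : ∀ x ∈ A, ∀ y ∈ X, y ∉ A → κ x y → x = a₀) (hAX : A ⊆ X) {h : X → X}
    (hh : Htpy κ κ X X h id) : Htpy κ κ A A (retractTo A a₀ ∘ h ∘ Set.inclusion hAX) id := by
  have := (hh.comp_left (digCont_retractTo hsym hsep)).comp_right (digCont_inclusion hAX)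
  rwa [Function.comp_id, retractTo_comp_inclusion] at this

theorem retractTo_comp_not_surjective {W : Type*} {a₀ : A} {h : W → X} {p : X} (hpA : p.1 ∈ A)
    (hp₀ : p.1 ≠ a₀) (hmiss : ∀ w, h w ≠ p) : ¬ Function.Surjective (retractTo A a₀ ∘ h) := by
  intro hsurj
  obtain ⟨w, hw⟩ := hsurj ⟨p.1, hpA⟩
  by_cases hmem : (h w).1 ∈ A
  · rw [Function.comp_apply, retractTo_of_mem hmem] at hw
    have hval := congrArg Subtype.val hw
    exact hmiss w (Subtype.ext hval)
  · rw [Function.comp_apply, retractTo_of_notMem hmem] at hw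
    exact hp₀ (congrArg Subtype.val hw).symm

theorem retractTo_comp_not_bijective (hsym : Symmetric κ) (hirr : Irreflexive κ) {a₀ : A}
    (hsep : ∀ x ∈ A, ∀ y ∈ X, y ∉ A → κ x y → x = a₀) (hnbr : ∀ x ∈ A, ∃ y ∈ A, κ x y)
    (hAX : A ⊆ X) {h : X → X} (hh : DigCont κ κ X X h) (hmiss : ∀ x, (h x).1 ≠ a₀) :
    ¬ Function.Bijective (retractTo A a₀ ∘ h ∘ Set.inclusion hAX) := by
  rintro ⟨hinj, hsurj⟩
  obtain ⟨σ, hσ⟩ := hsurj a₀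
  obtain ⟨τ, hτ, hστ⟩ := hnbr σ.1 σ.2
  have hout : (h (Set.inclusion hAX σ)).1 ∉ A := by
    intro hmem
    rw [Function.comp_apply, Function.comp_apply, retractTo_of_mem hmem] at hσ
    exact hmiss _ (congrArg Subtype.val hσ)
  have hin : (h (Set.inclusion hAX ⟨τ, hτ⟩)).1 ∈ A := by
    by_contra hnot
    have hτσ : (⟨τ, hτ⟩ : A) = σ := hinj (by
      rw [hσ, Function.comp_apply, Function.comp_apply, retractTo_of_notMem hnot])
    exact hirr _ (hτσ ▸ hστ)
  rcases hh (Set.inclusion hAX σ) (Set.inclusion hAX ⟨τ, hτ⟩) hστ with heq | hadj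
  · exact hout (heq ▸ hin)
  · exact hmiss _ (hsep _ hin _ (h _).2 hout (hsym hadj))

theorem eq_of_adj_notMem_left {B : Set α} {x₀ : α} (hint : A ∩ B = {x₀})
    (hw : ∀ x ∈ A, ∀ y ∈ B, κ x y → x = x₀ ∨ y = x₀) :
    ∀ x ∈ A, ∀ y ∈ A ∪ B, y ∉ A → κ x y → x = x₀ := by
  have hx₀ : x₀ ∈ A := (hint ▸ rfl : x₀ ∈ A ∩ B).1
  intro x hx y hy hyA hxy
  exact (hw x hx y (hy.resolve_left hyA) hxy).resolve_right fun h => hyA (h ▸ hx₀)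

theorem eq_of_adj_notMem_right (hsym : Symmetric κ) {B : Set α} {x₀ : α}
    (hint : A ∩ B = {x₀}) (hw : ∀ x ∈ A, ∀ y ∈ B, κ x y → x = x₀ ∨ y = x₀) :
    ∀ x ∈ B, ∀ y ∈ A ∪ B, y ∉ B → κ x y → x = x₀ := by
  have hx₀ : x₀ ∈ B := (hint ▸ rfl : x₀ ∈ A ∩ B).2
  intro x hx y hy hyB hxy
  exact (hw y (hy.resolve_right hyB) x hx (hsym hxy)).resolve_left fun h => hyB (h ▸ hx₀)

end Wedge

theorem not_surjective_comp_of_ncard_lt {α β : Type*} {X : Set α} {Z : Set β}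
    (hZ : Z.Finite) (hcard : Z.ncard < X.ncard) (f : X → Z) (g : Z → X) :
    ¬ Function.Surjective (g ∘ f) := by
  intro hsurj
  have := hZ.to_subtype
  have := Nat.card_le_card_of_surjective g hsurj.of_comp
  rw [Nat.card_coe_set_eq, Nat.card_coe_set_eq] at this
  omega

theorem wedge_with_scc_irreducible_general
    {n : ℕ} (κ : ZPoint n → ZPoint n → Prop)
    (hsym : Symmetric κ) (hirr : Irreflexive κ)
    (Y S : Set (ZPoint n)) (x₀ : ZPoint n)
    (hYfin : Y.Finite)
    (m : ℕ) (hm : 5 ≤ m) (hS : IsSimpleClosedCurve κ S m)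
    (hint : Y ∩ S = {x₀})
    (hwedge : ∀ x ∈ Y, ∀ y ∈ S, κ x y → x = x₀ ∨ y = x₀)
    (hY : ¬ Reducible κ Y) :
    ¬ Reducible κ (Y ∪ S) := by
  rintro ⟨k, Z, lam, -, -, hZfin, hZcard, f, g, hf, hg, hgf, -⟩
  have hx₀ : x₀ ∈ Y ∩ S := hint ▸ rfl
  have hsepY := eq_of_adj_notMem_left hint hwedge
  have hsepS := eq_of_adj_notMem_right hsym hint hwedge
  have hh : DigCont κ κ _ _ (g ∘ f) := hf.comp hg
  obtain ⟨p, hp⟩ := not_forall.mp (not_surjective_comp_of_ncard_lt hZfin hZcard f g)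
  have hφS := hS.bijective_of_htpy_id hm
    ((hgf.retractTo_comp_comp_inclusion hsym (a₀ := ⟨x₀, hx₀.2⟩) hsepS
      Set.subset_union_right).symm hsym)
  by_cases hp₀ : p.1 = x₀
  · exact retractTo_comp_not_bijective hsym hirr hsepS hS.exists_adj _ hh
      (fun q hq => hp ⟨q, Subtype.ext (hq.trans hp₀.symm)⟩) hφS
  rcases p.2 with hpY | hpS
  · exact hY (reducible_of_htpy_id_of_not_surjective hsym hirr hYfin
      ((digCont_inclusion _).comp (hh.comp (digCont_retractTo hsym hsepY)))
      ((hgf.retractTo_comp_comp_inclusion hsym (a₀ := ⟨x₀, hx₀.1⟩) hsepY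
        Set.subset_union_left).symm hsym)
      (retractTo_comp_not_surjective (a₀ := ⟨x₀, hx₀.1⟩) hpY hp₀
        fun w hw => hp ⟨Set.inclusion Set.subset_union_left w, hw⟩))
  · exact retractTo_comp_not_surjective hpS hp₀
      (fun w hw => hp ⟨Set.inclusion Set.subset_union_right w, hw⟩) hφS.2

/-- A wedge of a finite irreducible digital image with more than one
point and a digital simple closed curve of at least 5 points is irreducible. -/
theorem wedge_with_scc_irreducible
    {n : ℕ} (κ : ZPoint n → ZPoint n → Prop)
    (hsym : Symmetric κ) (hirr : Irreflexive κ)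
    (Y S : Set (ZPoint n)) (x₀ : ZPoint n)
    (hYfin : Y.Finite) (hYcard : 1 < Y.ncard)
    (m : ℕ) (hm : 5 ≤ m) (hS : IsSimpleClosedCurve κ S m)
    (hint : Y ∩ S = {x₀})
    (hwedge : ∀ x ∈ Y, ∀ y ∈ S, κ x y → x = x₀ ∨ y = x₀)
    (hY : ¬ Reducible κ Y) :
    ¬ Reducible κ (Y ∪ S) :=
  wedge_with_scc_irreducible_general κ hsym hirr Y S x₀ hYfin m hm hS hint hwedge hY
end

section
/- Let (X, κ) be a digital image. Then X is rigid if and only if the only 1-map in C(X, κ) is id_X. -/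
/-- A digital image `X` is rigid if and only if the only 1-map in
`C(X, κ)` is the identity. -/
theorem rigid_iff_only_one_map_is_id
    {n : ℕ} (κ : ZPoint n → ZPoint n → Prop)
    (hsym : Symmetric κ) (hirr : Irreflexive κ)
    (X : Set (ZPoint n)) :
    Rigid κ X ↔ ∀ f : X → X, OneMap κ X f → f = id := by
  constructor
  · intro hR f hf
    apply hR f hf.1
    refine ⟨1, fun x t => if t = 0 then x else f x, by simp, by simp, ?_, ?_⟩
    · intro x t ht
      interval_cases t
      simp only [if_pos rfl, if_neg one_ne_zero]
      rcases hf.2 x with h | h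
      · exact Or.inl h.symm
      · exact Or.inr (hsym h)
    · intro t ht
      interval_cases t
      · intro x x' hxx'
        simpa using Or.inr hxx'
      · simpa using hf.1
  · rintro h f hc ⟨m, F, h0, hm, hstep, hcont⟩
    have key : ∀ t, t ≤ m → (fun x => F x t) = id := by
      intro t
      induction t with
      | zero => intro _; funext x; exact h0 x
      | succ t ih =>
        intro ht
        have hid := ih (Nat.le_of_succ_le ht)
        apply h
        refine ⟨hcont (t + 1) ht, fun x => ?_⟩
        have hx : F x t = x := congrFun hid x
        rcases hstep x t (Nat.lt_of_succ_le ht) with he | ha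
        · left; show F x (t + 1) = x; rw [← he, hx]
        · right; show κ (F x (t + 1)).1 x.1; rw [hx] at ha; exact hsym ha
    funext x
    rw [show f x = F x m from (hm x).symm]
    exact congrFun (key m le_rfl) x
end

section
/- A digital simple closed curve (S, κ) of at least 5 points is irreducible but not rigid. -/
namespace SCCAux

variable {m : ℕ} [NeZero m]

/-- `a` is small: equal to 0, 1 or -1 in `ZMod m`. -/
def Small (a : ZMod m) : Prop := a = 0 ∨ a = 1 ∨ a = -1

/-- integer lift of a small element -/
def eps (a : ZMod m) : ℤ := if a = 0 then 0 else if a = 1 then 1 else -1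

lemma eps_bound (a : ZMod m) : -1 ≤ eps a ∧ eps a ≤ 1 := by
  unfold eps; split <;> [omega; (split <;> omega)]

lemma int_eq_of_cast_eq' (hm : 5 ≤ m) {x y : ℤ} (h : (x : ZMod m) = (y : ZMod m))
    (hb : |x - y| < m) : x = y := by
  have h0 : ((x - y : ℤ) : ZMod m) = 0 := by push_cast; rw [h]; ring
  have hdvd : (m : ℤ) ∣ (x - y) := by
    rwa [ZMod.intCast_zmod_eq_zero_iff_dvd] at h0
  have := Int.eq_zero_of_abs_lt_dvd hdvd hb
  omega

lemma one_ne_zero'' (hm : 5 ≤ m) : (1 : ZMod m) ≠ 0 := by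
  intro h
  have h' : ((1 : ℤ) : ZMod m) = ((0 : ℤ) : ZMod m) := by push_cast; simpa using h
  have := int_eq_of_cast_eq' hm h' (by simp; omega)
  omega

lemma neg_one_ne_zero' (hm : 5 ≤ m) : (-1 : ZMod m) ≠ 0 := by
  intro h
  have h' : ((-1 : ℤ) : ZMod m) = ((0 : ℤ) : ZMod m) := by push_cast; simpa using h
  have := int_eq_of_cast_eq' hm h' (by simp; omega)
  omega

lemma neg_one_ne_one' (hm : 5 ≤ m) : (-1 : ZMod m) ≠ 1 := by
  intro h
  have h' : ((-1 : ℤ) : ZMod m) = ((1 : ℤ) : ZMod m) := by push_cast; simpa using h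
  have := int_eq_of_cast_eq' hm h' (by rw [abs_lt]; constructor <;> omega)
  omega

lemma eps_one (hm : 5 ≤ m) : eps (1 : ZMod m) = 1 := by
  unfold eps; rw [if_neg (one_ne_zero'' hm), if_pos rfl]

lemma eps_cast (hm : 5 ≤ m) {a : ZMod m} (h : Small a) : ((eps a : ℤ) : ZMod m) = a := by
  unfold eps
  rcases h with h | h | h <;> subst h
  · simp
  · rw [if_neg (one_ne_zero'' hm), if_pos rfl]; simp
  · rw [if_neg (neg_one_ne_zero' hm), if_neg (neg_one_ne_one' hm)]; simp

/-- `φ` is a continuous self-map of the cycle. -/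
def Cont (φ : ZMod m → ZMod m) : Prop := ∀ i, Small (φ (i + 1) - φ i)

noncomputable def Dsum (φ : ZMod m → ZMod m) : ℤ :=
  ∑ i : ZMod m, eps (φ (i + 1) - φ i)

lemma sum_shift (h : ZMod m → ℤ) : ∑ i : ZMod m, h (i + 1) = ∑ i : ZMod m, h i :=
  Fintype.sum_equiv (Equiv.addRight 1) _ _ (fun i => rfl)

lemma dsum_id (hm : 5 ≤ m) : Dsum (id : ZMod m → ZMod m) = m := by
  unfold Dsum
  have h1 : ∀ i : ZMod m, eps (id (i + 1) - id i) = 1 := fun i => by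
    simp only [id]
    have : i + 1 - i = (1 : ZMod m) := by ring
    rw [this, eps_one hm]
  rw [Finset.sum_congr rfl (fun i _ => h1 i)]
  simp [ZMod.card m]

lemma cont_id : Cont (id : ZMod m → ZMod m) := fun i => by
  right; left; simp

lemma dsum_step (hm : 5 ≤ m) {φ ψ : ZMod m → ZMod m} (hφ : Cont φ) (hψ : Cont ψ)
    (hc : ∀ i, Small (ψ i - φ i)) : Dsum ψ = Dsum φ := by
  have key : ∀ i, eps (ψ (i+1) - ψ i) - eps (φ (i+1) - φ i)
      = eps (ψ (i+1) - φ (i+1)) - eps (ψ i - φ i) := by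
    intro i
    apply int_eq_of_cast_eq' hm
    · push_cast
      rw [eps_cast hm (hψ i), eps_cast hm (hφ i), eps_cast hm (hc (i+1)), eps_cast hm (hc i)]
      ring
    · have b1 := eps_bound (ψ (i+1) - ψ i)
      have b2 := eps_bound (φ (i+1) - φ i)
      have b3 := eps_bound (ψ (i+1) - φ (i+1))
      have b4 := eps_bound (ψ i - φ i)
      rw [abs_lt]; constructor <;> push_cast <;> omega
  have : Dsum ψ - Dsum φ
      = (∑ i : ZMod m, eps (ψ (i+1) - φ (i+1))) - ∑ i : ZMod m, eps (ψ i - φ i) := by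
    unfold Dsum
    rw [← Finset.sum_sub_distrib, ← Finset.sum_sub_distrib]
    exact Finset.sum_congr rfl (fun i _ => key i)
  rw [sum_shift (fun i => eps (ψ i - φ i))] at this
  omega

lemma dsum_nonsurj (hm : 5 ≤ m) {φ : ZMod m → ZMod m} (hφ : Cont φ)
    {c : ZMod m} (hc : ∀ i, φ i ≠ c) : Dsum φ = 0 := by
  set u : ZMod m → ℤ := fun i => ((φ i - c).val : ℤ) with hu
  have hub : ∀ i, 1 ≤ u i ∧ u i ≤ m - 1 := by
    intro i
    have h1 : φ i - c ≠ 0 := sub_ne_zero.mpr (hc i)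
    have h2 : (φ i - c).val ≠ 0 := fun h => h1 (by rwa [← ZMod.val_eq_zero])
    have h3 : (φ i - c).val < m := ZMod.val_lt _
    simp only [hu]
    omega
  have hcast : ∀ i, ((u i : ℤ) : ZMod m) = φ i - c := by
    intro i; simp only [hu]; push_cast; rw [ZMod.natCast_val, ZMod.cast_id]
  have key : ∀ i, eps (φ (i+1) - φ i) = u (i+1) - u i := by
    intro i
    apply int_eq_of_cast_eq' hm
    · push_cast
      rw [eps_cast hm (hφ i), hcast (i+1), hcast i]; ring
    · have b1 := eps_bound (φ (i+1) - φ i)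
      have b2 := hub (i+1)
      have b3 := hub i
      rw [abs_lt]; constructor <;> push_cast <;> omega
  unfold Dsum
  rw [Finset.sum_congr rfl (fun i _ => key i), Finset.sum_sub_distrib,
    sum_shift u, sub_self]

end SCCAux

/-- A digital simple closed curve of at least 5 points is irreducible
but not rigid. -/
theorem scc_irreducible_not_rigid
    {n : ℕ} (κ : ZPoint n → ZPoint n → Prop)
    (hsym : Symmetric κ) (hirr : Irreflexive κ)
    (S : Set (ZPoint n)) (m : ℕ) (hm : 5 ≤ m)
    (hS : IsSimpleClosedCurve κ S m) :
    ¬ Reducible κ S ∧ ¬ Rigid κ S := by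

  obtain ⟨s, hinj, rfl, hadj⟩ := hS
  haveI : NeZero m := ⟨by omega⟩
  set e : ZMod m ≃ ↥(Set.range s) := Equiv.ofInjective s hinj with he_def
  have he : ∀ i : ZMod m, ((e i : ↥(Set.range s)) : ZPoint n) = s i := fun i => rfl
  have he2 : ∀ y : ↥(Set.range s), (y : ZPoint n) = s (e.symm y) := by
    intro y
    conv_lhs => rw [← e.apply_symm_apply y]
    exact he _
  -- translate a self-map of S to a self-map of ZMod m
  set tr : (↥(Set.range s) → ↥(Set.range s)) → ZMod m → ZMod m :=
    fun f i => e.symm (f (e i)) with htr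
  have htrv : ∀ f (i : ZMod m), ((f (e i) : ↥(Set.range s)) : ZPoint n) = s (tr f i) :=
    fun f i => he2 (f (e i))
  have hadj1 : ∀ a b : ZMod m, κ (s a) (s b) → b - a = 1 ∨ b - a = -1 := by
    intro a b hk
    rcases (hadj a b).mp hk with h | h <;> subst h
    · left; ring
    · right; ring
  have hadjself : ∀ a : ZMod m, κ (s a) (s (a + 1)) := fun a =>
    (hadj a (a + 1)).mpr (Or.inl rfl)
  have hcont : ∀ f, DigCont κ κ (Set.range s) (Set.range s) f → SCCAux.Cont (tr f) := by
    intro f hf i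
    have hk : κ ((e i : ↥(Set.range s)) : ZPoint n) ((e (i+1) : ↥(Set.range s)) : ZPoint n) := by
      rw [he i, he (i+1)]; exact hadjself i
    rcases hf (e i) (e (i+1)) hk with h | h
    · left
      have : tr f (i + 1) = tr f i := by simp only [htr, h]
      rw [this]; ring
    · rw [htrv f i, htrv f (i+1)] at h
      rcases hadj1 _ _ h with h' | h'
      · right; left; exact h'
      · right; right; exact h'
  -- PART 1 : not rigid
  have not_rigid : ¬ Rigid κ (Set.range s) := by
    intro hrig
    set r : ↥(Set.range s) → ↥(Set.range s) := fun x => e (e.symm x + 1) with hr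
    have hrcont : DigCont κ κ (Set.range s) (Set.range s) r := by
      intro x x' hk
      rw [he2 x, he2 x'] at hk
      right
      simp only [hr, he]
      rcases (hadj _ _).mp hk with h | h <;> rw [h]
      · exact (hadj _ _).mpr (Or.inl (by ring))
      · exact (hadj _ _).mpr (Or.inr (by ring))
    have hhtpy : Htpy κ κ (Set.range s) (Set.range s) id r := by
      refine ⟨1, fun x t => if t = 0 then x else r x, fun x => by simp, fun x => by simp, ?_, ?_⟩
      · intro x t ht
        have ht0 : t = 0 := by omega
        subst ht0
        norm_num
        right
        rw [he2 x]
        simp only [hr, he]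
        exact hadjself _
      · intro t ht x x' hk
        by_cases h0 : t = 0
        · simp only [h0, if_pos rfl]
          exact Or.inr hk
        · simp only [if_neg h0]
          exact hrcont x x' hk
    have := hrig r hrcont hhtpy
    have h1 : r (e 0) = e 0 := by rw [this]; rfl
    have h2 : r (e 0) = e 1 := by simp [hr]
    rw [h2] at h1
    exact SCCAux.one_ne_zero'' hm (e.injective h1)
  -- PART 2 : irreducible
  refine ⟨?_, not_rigid⟩
  rintro ⟨k, Y, lam, hlsym, hlirr, hYfin, hYcard, f, g, hf, hg, hgf, hfg⟩
  -- g ∘ f is not surjective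
  have hnotsurj : ¬ Function.Surjective (tr (g ∘ f)) := by
    intro hsurj
    have hgf_surj : Function.Surjective (g ∘ f) := by
      intro y
      obtain ⟨i, hi⟩ := hsurj (e.symm y)
      exact ⟨e i, e.symm.injective hi⟩
    have hg_surj : Function.Surjective g := hgf_surj.of_comp
    haveI : Finite ↥Y := hYfin.to_subtype
    have hcard := Nat.card_le_card_of_surjective g hg_surj
    rw [Nat.card_coe_set_eq, Nat.card_coe_set_eq] at hcard
    omega
  simp only [Function.Surjective, not_forall] at hnotsurj
  obtain ⟨c, hc⟩ := hnotsurj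
  push_neg at hc
  -- homotopy invariance of winding sum
  obtain ⟨m0, F, hF0, hFm, hFstep, hFcont⟩ := hgf
  set Φ : ℕ → ZMod m → ZMod m := fun t => tr (fun x => F x t) with hΦ
  have hΦcont : ∀ t ≤ m0, SCCAux.Cont (Φ t) := fun t ht => hcont _ (hFcont t ht)
  have hΦstep : ∀ t < m0, ∀ i, SCCAux.Small (Φ (t+1) i - Φ t i) := by
    intro t ht i
    rcases hFstep (e i) t ht with h | h
    · left
      have : Φ (t+1) i = Φ t i := by simp only [hΦ, htr, h]
      rw [this]; ring
    · rw [htrv (fun x => F x t) i, htrv (fun x => F x (t+1)) i] at h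
      rcases hadj1 _ _ h with h' | h'
      · right; left; exact h'
      · right; right; exact h'
  have hinv : ∀ t ≤ m0, SCCAux.Dsum (Φ t) = SCCAux.Dsum (Φ 0) := by
    intro t
    induction t with
    | zero => intro _; rfl
    | succ t ih =>
      intro ht
      have h1 := ih (by omega)
      have h2 := SCCAux.dsum_step hm (hΦcont t (by omega)) (hΦcont (t+1) ht)
        (hΦstep t (by omega))
      omega
  have hΦ0 : Φ 0 = tr (g ∘ f) := by
    funext i; simp only [hΦ, htr, hF0]
  have hΦm : Φ m0 = id := by
    funext i
    simp only [hΦ, htr, hFm, id]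
    exact e.symm_apply_apply i
  have h1 : SCCAux.Dsum (Φ m0) = (m : ℤ) := by rw [hΦm]; exact SCCAux.dsum_id hm
  have hgfcont : DigCont κ κ (Set.range s) (Set.range s) (g ∘ f) := by
    intro x x' hk
    rcases hf x x' hk with h | h
    · left; simp only [Function.comp_apply, h]
    · rcases hg (f x) (f x') h with h' | h'
      · left; simp only [Function.comp_apply, h']
      · right; exact h'
  have h2 : SCCAux.Dsum (Φ 0) = 0 := by
    rw [hΦ0]; exact SCCAux.dsum_nonsurj hm (hcont _ hgfcont) hc
  have := hinv m0 le_rfl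
  omega
end

section
/- Let (X, κ) be a connected rigid digital image. Then the only 1-map in C(X, κ) is id_X. -/
/-- In a connected rigid digital image, the only 1-map in `C(X, κ)`
is the identity. -/
theorem connected_rigid_only_one_map_is_id
    {n : ℕ} (κ : ZPoint n → ZPoint n → Prop)
    (hsym : Symmetric κ) (hirr : Irreflexive κ)
    (X : Set (ZPoint n)) (hconn : DigConnected κ X) (hrig : Rigid κ X) :
    ∀ f : X → X, OneMap κ X f → f = id := by
  intro f hf
  apply hrig f hf.1
  refine ⟨1, fun x t => if t = 0 then x else f x, fun x => by simp, fun x => by simp,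
    ?_, ?_⟩
  · intro x t ht
    interval_cases t
    simp only [if_pos rfl, if_neg one_ne_zero]
    rcases hf.2 x with h | h
    · exact Or.inl h.symm
    · exact Or.inr (hsym h)
  · intro t _ x x' hadj
    by_cases h0 : t = 0
    · simp only [h0, if_pos rfl]
      by_cases hx : x = x'
      · exact Or.inl hx
      · exact Or.inr hadj
    · simp only [if_neg h0]
      exact hf.1 x x' hadj
end

section
/- Let (X, κ) be a connected rigid digital image. Then A ⊆ X is a freezing set for (X, κ) if and only if A is a cold set for (X, κ). -/
/-- In a connected rigid digital image, a subset is a freezing set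
iff it is a cold set. -/
theorem freezing_iff_cold_of_rigid
    {n : ℕ} (κ : ZPoint n → ZPoint n → Prop)
    (hsym : Symmetric κ) (hirr : Irreflexive κ)
    (X : Set (ZPoint n)) (hconn : DigConnected κ X) (hrig : Rigid κ X)
    (A : Set (ZPoint n)) (hA : A ⊆ X) :
    FreezingSet κ X A ↔ ColdSet κ X A := by
  constructor
  · intro hF f hf hfix x
    exact Or.inl (congrFun (hF f hf hfix) x)
  · intro hC f hf hfix
    have hcold := hC f hf hfix
    apply hrig f hf
    refine ⟨1, fun x t => if t = 0 then x else f x, ?_, ?_, ?_, ?_⟩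
    · intro x; simp
    · intro x; simp
    · intro x t ht
      interval_cases t
      simp only [if_pos rfl, if_neg one_ne_zero]
      rcases hcold x with h | h
      · exact Or.inl h.symm
      · exact Or.inr (hsym h)
    · intro t _ x x' hadj
      by_cases h0 : t = 0
      · simp only [h0, if_pos rfl]
        by_cases he : x = x'
        · exact Or.inl he
        · exact Or.inr hadj
      · simp only [if_neg h0]
        exact hf x x' hadj
end

section
/- Let (X, κ) be a digital image and f ∈ C(X, κ). Suppose x, x' ∈ X are fixed points of f such that there is a unique shortest κ-path P in X from x to x' (i.e., there is exactly one κ-path from x to x' of minimal length among all κ-paths in X from x to x'). Then every point of P is a fixed point of f. -/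
/-- If `x, x'` are fixed points of a continuous self-map `f` and there
is a unique shortest `κ`-path `P` in `X` from `x` to `x'`, then every point of `P`
is a fixed point of `f`. -/
theorem unique_shortest_path_fixed
    {n : ℕ} (κ : ZPoint n → ZPoint n → Prop)
    (hsym : Symmetric κ) (hirr : Irreflexive κ)
    (X : Set (ZPoint n)) (f : X → X) (hf : DigCont κ κ X X f)
    (x x' : X) (hx : f x = x) (hx' : f x' = x')
    (m : ℕ) (p : ℕ → ZPoint n)
    (hpath : IsPathIn κ X m p x.1 x'.1)
    (hshortest : ∀ (m' : ℕ) (q : ℕ → ZPoint n),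
      IsPathIn κ X m' q x.1 x'.1 → m ≤ m')
    (hunique : ∀ q : ℕ → ZPoint n,
      IsPathIn κ X m q x.1 x'.1 → ∀ i ≤ m, q i = p i) :
    ∀ i, (hi : i ≤ m) → f ⟨p i, hpath.1 i hi⟩ = ⟨p i, hpath.1 i hi⟩ := by
  obtain ⟨hmem, h0, hm, hadj⟩ := hpath
  set q : ℕ → ZPoint n := fun i =>
    if h : i ≤ m then (f ⟨p i, hmem i h⟩).1 else p i with hq
  have hqpath : IsPathIn κ X m q x.1 x'.1 := by
    refine ⟨?_, ?_, ?_, ?_⟩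
    · intro i hi
      simp only [hq, dif_pos hi]
      exact (f ⟨p i, hmem i hi⟩).2
    · simp only [hq, dif_pos (Nat.zero_le m)]
      have : (⟨p 0, hmem 0 (Nat.zero_le m)⟩ : X) = x := Subtype.ext h0
      rw [this, hx]
    · simp only [hq, dif_pos (le_refl m)]
      have : (⟨p m, hmem m (le_refl m)⟩ : X) = x' := Subtype.ext hm
      rw [this, hx']
    · intro i hi
      have hi1 : i ≤ m := le_of_lt hi
      have hi2 : i + 1 ≤ m := hi
      simp only [hq, dif_pos hi1, dif_pos hi2]
      rcases hadj i hi with he | hk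
      · left
        congr 1
        exact congrArg _ (Subtype.ext he)
      · rcases hf ⟨p i, hmem i hi1⟩ ⟨p (i+1), hmem (i+1) hi2⟩ hk with he | hk'
        · left; exact congrArg Subtype.val he
        · right; exact hk'
  intro i hi
  have := hunique q hqpath i hi
  simp only [hq, dif_pos hi] at this
  exact Subtype.ext this
end
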